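/- arXiv:2109.06084 — 5 statements merged into one kernel-verified Lean document; each statement's English description precedes it below -/
import Mathlib

section
/- The ceiling base-2 logarithm function log(n) = ⌈log₂ n⌉ (Mathlib's Nat.clog 2) is computable in linear time: there exists a constant C and a Turing machine (in the sense of Mathlib's Turing.TM2ComputableInTime, with natural numbers encoded in binary via Computability.finEncodingNatBool) computing it within C·x + C steps on inputs whose binary encoding has length x. -/
open Turing Computability Turing.TM2.Stmt

namespace ClogTM

abbrev σT : Type := Option Bool × Fin 3 × Bool

def initσ : σT := (none, 0, false)

def prog : Fin 3 → TM2.Stmt (fun _ : Fin 3 => Bool) (Fin 3) σT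
  | 0 => pop 0 (fun s b => (b, s.2)) <|
      branch (fun s => s.1.isSome)
        (branch (fun s => s.1 = some true)
          (branch (fun s => s.2.1 = 0)
            (load (fun s => (s.1, 1, s.2.2)) <| goto fun _ => 0)
            (branch (fun s => s.2.1 = 1)
              (load (fun s => (s.1, 2, true)) <| goto fun _ => 1)
              (goto fun _ => 1)))
          (goto fun _ => 1))
        (load (fun _ => initσ) halt)
  | 1 => pop 1 (fun s b => (b, s.2)) <|
      branch (fun s => s.1 = some true)
        (push 2 (fun _ => false) <| goto fun _ => 1)
        (push 1 (fun _ => true) <| goto fun _ => 2)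
  | 2 => pop 2 (fun s b => (b, s.2)) <|
      branch (fun s => s.1.isSome)
        (push 1 (fun _ => false) <| goto fun _ => 2)
        (branch (fun s => s.2.2)
          (load (fun s => (s.1, s.2.1, false)) <| goto fun _ => 1)
          (goto fun _ => 0))

def tm : FinTM2 where
  K := Fin 3
  k₀ := 0
  k₁ := 1
  Γ := fun _ => Bool
  Λ := Fin 3
  main := 0
  σ := σT
  initialState := initσ
  m := prog

def cfg (q : Option (Fin 3)) (v : σT) (a b c : List Bool) : tm.Cfg :=
  ⟨q, v, ![a, b, c]⟩

@[simp] lemma upd0 (a b c x : List Bool) :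
    Function.update ![a, b, c] (0 : Fin 3) x = ![x, b, c] := by
  funext i; fin_cases i <;> simp

@[simp] lemma upd1 (a b c x : List Bool) :
    Function.update ![a, b, c] (1 : Fin 3) x = ![a, x, c] := by
  funext i; fin_cases i <;> simp

@[simp] lemma upd2 (a b c x : List Bool) :
    Function.update ![a, b, c] (2 : Fin 3) x = ![a, b, x] := by
  funext i; fin_cases i <;> simp

@[simp] lemma vec2 (a b c : List Bool) : ![a, b, c] (2 : Fin 3) = c := rfl

/-! ### Single-step lemmas -/

lemma tm_step (c : tm.Cfg) :
    tm.step c = TM2.step (K := Fin 3) (Γ := fun _ => Bool) prog c := rfl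

lemma s0_nil (v : σT) (b : List Bool) :
    tm.step (cfg (some 0) v [] b []) = some (cfg none initσ [] b []) := by
  rw [tm_step]; simp [tm, cfg, prog, initσ]; rfl

lemma s0_false (v : σT) (a b c : List Bool) :
    tm.step (cfg (some 0) v (false :: a) b c) =
      some (cfg (some 1) (some false, v.2) a b c) := by
  rw [tm_step]; simp [tm, cfg, prog]; rfl

lemma s0_true_seen0 (v : σT) (a b c : List Bool) (h : v.2.1 = 0) :
    tm.step (cfg (some 0) v (true :: a) b c) =
      some (cfg (some 0) (some true, 1, v.2.2) a b c) := by
  rw [tm_step]; simp [tm, cfg, prog, h]; rfl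

lemma s0_true_seen1 (v : σT) (a b c : List Bool) (h : v.2.1 = 1) :
    tm.step (cfg (some 0) v (true :: a) b c) =
      some (cfg (some 1) (some true, 2, true) a b c) := by
  rw [tm_step]; simp [tm, cfg, prog, h]; rfl

lemma s0_true_seen2 (v : σT) (a b c : List Bool) (h : v.2.1 = 2) :
    tm.step (cfg (some 0) v (true :: a) b c) =
      some (cfg (some 1) (some true, 2, v.2.2) a b c) := by
  obtain ⟨v1, v2, v3⟩ := v
  simp only at h
  subst h
  rw [tm_step]; simp [tm, cfg, prog]; rfl

lemma s1_true (v : σT) (a b c : List Bool) :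
    tm.step (cfg (some 1) v a (true :: b) c) =
      some (cfg (some 1) (some true, v.2) a b (false :: c)) := by
  rw [tm_step]; simp [tm, cfg, prog]; rfl

lemma s1_false (v : σT) (a b c : List Bool) :
    tm.step (cfg (some 1) v a (false :: b) c) =
      some (cfg (some 2) (some false, v.2) a (true :: b) c) := by
  rw [tm_step]; simp [tm, cfg, prog]; rfl

lemma s1_nil (v : σT) (a c : List Bool) :
    tm.step (cfg (some 1) v a [] c) =
      some (cfg (some 2) (none, v.2) a [true] c) := by
  rw [tm_step]; simp [tm, cfg, prog]; rfl

lemma s2_cons (v : σT) (x : Bool) (a b c : List Bool) :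
    tm.step (cfg (some 2) v a b (x :: c)) =
      some (cfg (some 2) (some x, v.2) a (false :: b) c) := by
  rw [tm_step]; simp [tm, cfg, prog]; rfl

lemma s2_nil_p (v : σT) (a b : List Bool) (h : v.2.2 = true) :
    tm.step (cfg (some 2) v a b []) =
      some (cfg (some 1) (none, v.2.1, false) a b []) := by
  rw [tm_step]; simp [tm, cfg, prog, h]; rfl

lemma s2_nil (v : σT) (a b : List Bool) (h : v.2.2 = false) :
    tm.step (cfg (some 2) v a b []) =
      some (cfg (some 0) (none, v.2.1, false) a b []) := by
  obtain ⟨v1, v2, v3⟩ := v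
  simp only at h
  subst h
  rw [tm_step]; simp [tm, cfg, prog]; rfl


/-! ### Reachability -/

def Rch (k : ℕ) (c₁ c₂ : tm.Cfg) : Prop :=
  (flip bind tm.step)^[k] (some c₁) = some c₂

lemma Rch.zero (c : tm.Cfg) : Rch 0 c c := rfl

lemma Rch.head {c₁ c₂ c₃ : tm.Cfg} {k : ℕ} (h : tm.step c₁ = some c₂)
    (h2 : Rch k c₂ c₃) : Rch (k + 1) c₁ c₃ := by
  unfold Rch at *
  rw [Function.iterate_succ_apply, show (flip bind tm.step) (some c₁) = tm.step c₁ from rfl, h]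
  exact h2

lemma Rch.trans {c₁ c₂ c₃ : tm.Cfg} {j k : ℕ} (h : Rch j c₁ c₂) (h2 : Rch k c₂ c₃) :
    Rch (k + j) c₁ c₃ := by
  unfold Rch at *
  rw [Function.iterate_add_apply, h, h2]

lemma Rch.single {c₁ c₂ : tm.Cfg} (h : tm.step c₁ = some c₂) : Rch 1 c₁ c₂ :=
  Rch.head h (Rch.zero _)

/-! ### counter functions -/

def lead : List Bool → ℕ
  | true :: l => lead l + 1
  | _ => 0

def carry : List Bool → List Bool
  | [] => [true]
  | false :: l => true :: l
  | true :: l => carry l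

def incr : List Bool → List Bool
  | [] => [true]
  | false :: l => true :: l
  | true :: l => false :: incr l

def phi : List Bool → ℕ
  | [] => 0
  | true :: l => phi l + 1
  | false :: l => phi l

lemma incr_eq (b : List Bool) : incr b = List.replicate (lead b) false ++ carry b := by
  induction b with
  | nil => rfl
  | cons x l ih =>
    cases x
    · rfl
    · simp [incr, carry, lead, ih, List.replicate_succ]

lemma phi_incr (b : List Bool) : phi (incr b) + lead b = phi b + 1 := by
  induction b with
  | nil => rfl
  | cons x l ih =>
    cases x
    · rfl
    · simp only [incr, phi, lead] at *
      omega

lemma rep_shift (n : ℕ) (c : List Bool) :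
    List.replicate n false ++ false :: c = List.replicate (n + 1) false ++ c := by
  simp [List.replicate_succ', List.append_assoc]

/-! ### the increment loop -/

lemma evalsA (b : List Bool) : ∀ (v : σT) (a c : List Bool),
    ∃ x, Rch (lead b + 1) (cfg (some 1) v a b c)
      (cfg (some 2) (x, v.2) a (carry b) (List.replicate (lead b) false ++ c)) := by
  induction b with
  | nil =>
    intro v a c
    exact ⟨none, Rch.single (s1_nil v a c)⟩
  | cons x l ih =>
    intro v a c
    cases x
    · exact ⟨some false, Rch.single (s1_false v a l c)⟩
    · obtain ⟨y, hy⟩ := ih (some true, v.2) a (false :: c)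
      rw [rep_shift] at hy
      exact ⟨y, Rch.head (s1_true v a l c) hy⟩

lemma evalsB (j : ℕ) : ∀ (v : σT) (a b : List Bool),
    Rch (j + 1) (cfg (some 2) v a b (List.replicate j false))
      (cfg (some (if v.2.2 then 1 else 0)) (none, v.2.1, false) a
        (List.replicate j false ++ b) []) := by
  induction j with
  | zero =>
    intro v a b
    cases hp : v.2.2
    · simpa [hp] using Rch.single (s2_nil v a b hp)
    · simpa [hp] using Rch.single (s2_nil_p v a b hp)
  | succ j ih =>
    intro v a b
    rw [List.replicate_succ]
    have h2 := ih (some false, v.2) a (false :: b)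
    rw [rep_shift] at h2
    exact Rch.head (s2_cons v false a b _) h2

lemma inc_once (b : List Bool) (v : σT) (a : List Bool) (hp : v.2.2 = false) :
    Rch (2 * lead b + 2) (cfg (some 1) v a b [])
      (cfg (some 0) (none, v.2.1, false) a (incr b) []) := by
  obtain ⟨x, hx⟩ := evalsA b v a []
  have h2 := evalsB (lead b) (x, v.2) a (carry b)
  simp only [hp, if_false, List.append_nil, ← incr_eq] at h2 hx
  have h3 := hx.trans h2
  have : 2 * lead b + 2 = (lead b + 1) + (lead b + 1) := by ring
  rw [this]
  exact h3

lemma inc_pending (b : List Bool) (v : σT) (a : List Bool) (hp : v.2.2 = true) :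
    Rch ((2 * lead b + 2) + (2 * lead (incr b) + 2)) (cfg (some 1) v a b [])
      (cfg (some 0) (none, v.2.1, false) a (incr (incr b)) []) := by
  obtain ⟨x, hx⟩ := evalsA b v a []
  have h2 := evalsB (lead b) (x, v.2) a (carry b)
  simp only [hp, if_true, List.append_nil, ← incr_eq] at h2 hx
  have h3 := hx.trans h2
  have h4 := inc_once (incr b) (none, v.2.1, false) a rfl
  have h5 := h3.trans (by simpa using h4)
  have : (2 * lead b + 2) + (2 * lead (incr b) + 2)
      = (2 * lead (incr b) + 2) + ((lead b + 1) + (lead b + 1)) := by ring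
  rw [this]
  exact h5


/-! ### encoding facts -/

lemma incr_posnum (p : PosNum) : incr (encodePosNum p) = encodePosNum p.succ := by
  induction p with
  | one => rfl
  | bit1 q ih => simp [encodePosNum, incr, ih, PosNum.succ]
  | bit0 q ih => simp [encodePosNum, incr, PosNum.succ]

lemma incr_encode (m : ℕ) : incr (encodeNat m) = encodeNat (m + 1) := by
  show incr (encodeNum (m : Num)) = encodeNum ((m + 1 : ℕ) : Num)
  have : ((m + 1 : ℕ) : Num) = (m : Num) + 1 := by
    exact_mod_cast Nat.cast_add_one m
  rw [this]
  cases h : (m : Num) with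
  | zero => rfl
  | pos p =>
    show incr (encodePosNum p) = encodeNum (Num.pos p + 1)
    rw [incr_posnum, Num.add_one]
    rfl

/-! ### the result function -/

def g : Fin 3 → List Bool → ℕ
  | _, [] => 0
  | s, b :: l => if b = false then g s l + 1
      else if s = 0 then g 1 l else if s = 1 then g 2 l + 2 else g 2 l + 1

lemma g2_eq (l : List Bool) : g 2 l = l.length := by
  induction l with
  | nil => rfl
  | cons x t ih => cases x <;> simp [g, ih]

lemma g1_eq (l : List Bool) (h : true ∈ l) : g 1 l = l.length + 1 := by
  induction l with
  | nil => simp at h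
  | cons x t ih =>
    cases x
    · simp at h
      simp [g, ih h]
    · simp [g, g2_eq]

/-! ### main loop -/

lemma mainRun (a : List Bool) : ∀ (v : Option Bool) (sn : Fin 3) (m : ℕ),
    ∃ k, Rch k (cfg (some 0) (v, sn, false) a (encodeNat m) [])
        (cfg none initσ [] (encodeNat (m + g sn a)) [])
      ∧ k ≤ 9 * a.length + 2 * phi (encodeNat m) + 1 := by
  induction a with
  | nil =>
    intro v sn m
    exact ⟨1, by simpa [g] using Rch.single (s0_nil (v, sn, false) (encodeNat m)), by omega⟩
  | cons x t ih =>
    intro v sn m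
    have e1 : incr (encodeNat m) = encodeNat (m + 1) := incr_encode m
    have key := phi_incr (encodeNat m)
    cases x
    · -- false bit : one increment
      obtain ⟨k, hk, hb⟩ := ih none sn (m + 1)
      have h1 := s0_false (v, sn, false) t (encodeNat m) []
      have h2 : Rch (2 * lead (encodeNat m) + 2)
          (cfg (some 1) (some false, sn, false) t (encodeNat m) [])
          (cfg (some 0) (none, sn, false) t (encodeNat (m + 1)) []) := by
        have h := inc_once (encodeNat m) (some false, sn, false) t rfl
        rw [e1] at h; exact h
      have hm : m + g sn (false :: t) = m + 1 + g sn t := by simp [g]; ring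
      rw [hm]
      rw [e1] at key
      exact ⟨k + (2 * lead (encodeNat m) + 2) + 1, Rch.head h1 (h2.trans hk), by
        simp only [List.length_cons]; omega⟩
    · -- true bit
      fin_cases sn
      · -- sn = 0 : skip increment
        show ∃ k, Rch k (cfg (some 0) (v, (0 : Fin 3), false) (true :: t) (encodeNat m) [])
            (cfg none initσ [] (encodeNat (m + g 0 (true :: t))) [])
          ∧ k ≤ 9 * (true :: t).length + 2 * phi (encodeNat m) + 1
        obtain ⟨k, hk, hb⟩ := ih (some true) 1 m
        have h1 := s0_true_seen0 (v, 0, false) t (encodeNat m) [] rfl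
        have hm : m + g 0 (true :: t) = m + g 1 t := by simp [g]
        rw [hm]
        exact ⟨k + 1, Rch.head h1 hk, by simp only [List.length_cons]; omega⟩
      · -- sn = 1 : double increment
        show ∃ k, Rch k (cfg (some 0) (v, (1 : Fin 3), false) (true :: t) (encodeNat m) [])
            (cfg none initσ [] (encodeNat (m + g 1 (true :: t))) [])
          ∧ k ≤ 9 * (true :: t).length + 2 * phi (encodeNat m) + 1
        have e2 : incr (encodeNat (m + 1)) = encodeNat (m + 2) := incr_encode (m + 1)
        have key2 := phi_incr (encodeNat (m + 1))
        rw [e2] at key2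
        rw [e1] at key
        obtain ⟨k, hk, hb⟩ := ih none 2 (m + 2)
        have h1 := s0_true_seen1 (v, 1, false) t (encodeNat m) [] rfl
        have h2 : Rch ((2 * lead (encodeNat m) + 2) + (2 * lead (encodeNat (m + 1)) + 2))
            (cfg (some 1) (some true, 2, true) t (encodeNat m) [])
            (cfg (some 0) (none, 2, false) t (encodeNat (m + 2)) []) := by
          have h := inc_pending (encodeNat m) (some true, 2, true) t rfl
          rw [e1, e2] at h
          exact h
        have hm : m + g 1 (true :: t) = m + 2 + g 2 t := by simp [g]; ring
        rw [hm]
        exact ⟨k + ((2 * lead (encodeNat m) + 2) + (2 * lead (encodeNat (m + 1)) + 2)) + 1,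
          Rch.head h1 (h2.trans hk), by simp only [List.length_cons]; omega⟩
      · -- sn = 2 : one increment
        show ∃ k, Rch k (cfg (some 0) (v, (2 : Fin 3), false) (true :: t) (encodeNat m) [])
            (cfg none initσ [] (encodeNat (m + g 2 (true :: t))) [])
          ∧ k ≤ 9 * (true :: t).length + 2 * phi (encodeNat m) + 1
        obtain ⟨k, hk, hb⟩ := ih none 2 (m + 1)
        have h1 := s0_true_seen2 (v, 2, false) t (encodeNat m) [] rfl
        have h2 : Rch (2 * lead (encodeNat m) + 2)
            (cfg (some 1) (some true, 2, false) t (encodeNat m) [])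
            (cfg (some 0) (none, 2, false) t (encodeNat (m + 1)) []) := by
          have h := inc_once (encodeNat m) (some true, 2, false) t rfl
          rw [e1] at h; exact h
        have hm : m + g 2 (true :: t) = m + 1 + g 2 t := by simp [g]; ring
        rw [hm]
        rw [e1] at key
        exact ⟨k + (2 * lead (encodeNat m) + 2) + 1, Rch.head h1 (h2.trans hk), by
          simp only [List.length_cons]; omega⟩


/-! ### clog computation -/

lemma true_mem_encodePosNum (p : PosNum) : true ∈ encodePosNum p := by
  induction p with
  | one => simp [encodePosNum]
  | bit1 q ih => simp [encodePosNum]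
  | bit0 q ih => simp [encodePosNum, ih]

lemma encodePosNum_ne_nil (p : PosNum) : encodePosNum p ≠ [] :=
  fun h => by simpa [h] using true_mem_encodePosNum p

lemma pos_bounds (p : PosNum) :
    2 ^ ((encodePosNum p).length - 1) ≤ (p : ℕ) ∧ (p : ℕ) < 2 ^ (encodePosNum p).length := by
  induction p with
  | one => simp [encodePosNum]
  | bit1 q ih =>
    obtain ⟨h1, h2⟩ := ih
    have hL : 1 ≤ (encodePosNum q).length :=
      List.length_pos_iff.2 (encodePosNum_ne_nil q)
    have hc : ((q.bit1 : PosNum) : ℕ) = 2 * (q : ℕ) + 1 := by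
      rw [PosNum.cast_bit1]; ring
    constructor
    · simp only [encodePosNum, List.length_cons, hc, Nat.add_sub_cancel]
      calc 2 ^ (encodePosNum q).length = 2 * 2 ^ ((encodePosNum q).length - 1) := by
            rw [← pow_succ']; congr 1; omega
        _ ≤ 2 * (q : ℕ) := by omega
        _ ≤ 2 * (q : ℕ) + 1 := by omega
    · simp only [encodePosNum, List.length_cons, hc, pow_succ]
      omega
  | bit0 q ih =>
    obtain ⟨h1, h2⟩ := ih
    have hL : 1 ≤ (encodePosNum q).length :=
      List.length_pos_iff.2 (encodePosNum_ne_nil q)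
    have hc : ((q.bit0 : PosNum) : ℕ) = 2 * (q : ℕ) := by
      rw [PosNum.cast_bit0]; ring
    constructor
    · simp only [encodePosNum, List.length_cons, hc, Nat.add_sub_cancel]
      calc 2 ^ (encodePosNum q).length = 2 * 2 ^ ((encodePosNum q).length - 1) := by
            rw [← pow_succ']; congr 1; omega
        _ ≤ 2 * (q : ℕ) := by omega
    · simp only [encodePosNum, List.length_cons, hc, pow_succ]
      omega

lemma clog2_eq {n k : ℕ} (h1 : 2 ^ k < n) (h2 : n ≤ 2 ^ (k + 1)) :
    Nat.clog 2 n = k + 1 :=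
  le_antisymm ((Nat.clog_le_iff_le_pow one_lt_two).2 h2)
    ((Nat.lt_clog_iff_pow_lt one_lt_two).2 h1)

lemma clog_enc (p : PosNum) : g 0 (encodePosNum p) = Nat.clog 2 (p : ℕ) := by
  induction p with
  | one => simp [encodePosNum, g]
  | bit1 q ih =>
    obtain ⟨h1, h2⟩ := pos_bounds q
    have hL : 1 ≤ (encodePosNum q).length :=
      List.length_pos_iff.2 (encodePosNum_ne_nil q)
    have hc : ((q.bit1 : PosNum) : ℕ) = 2 * (q : ℕ) + 1 := by
      rw [PosNum.cast_bit1]; ring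
    have hq1 : 1 ≤ (q : ℕ) := PosNum.to_nat_pos q
    have hlow : 2 ^ (encodePosNum q).length < 2 * (q : ℕ) + 1 := by
      have : 2 ^ (encodePosNum q).length = 2 * 2 ^ ((encodePosNum q).length - 1) := by
        rw [← pow_succ']; congr 1; omega
      omega
    have hhigh : 2 * (q : ℕ) + 1 ≤ 2 ^ ((encodePosNum q).length + 1) := by
      rw [pow_succ]; omega
    have : g 0 (encodePosNum q.bit1) = (encodePosNum q).length + 1 := by
      show g 0 (true :: encodePosNum q) = _
      simp [g, g1_eq _ (true_mem_encodePosNum q)]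
    rw [this, hc, clog2_eq hlow hhigh]
  | bit0 q ih =>
    have hc : ((q.bit0 : PosNum) : ℕ) = 2 * (q : ℕ) := by
      rw [PosNum.cast_bit0]; ring
    have hstep : g 0 (encodePosNum q.bit0) = g 0 (encodePosNum q) + 1 := by
      show g 0 (false :: encodePosNum q) = _
      simp [g]
    rw [hstep, ih, hc]
    -- clog 2 (2 q) = clog 2 q + 1
    rcases eq_or_lt_of_le (Nat.succ_le_of_lt (PosNum.to_nat_pos q) : 1 ≤ (q : ℕ)) with h | h
    · rw [← h]; decide
    · have h2 : 2 ≤ (q : ℕ) := h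
      have hk : 1 ≤ Nat.clog 2 (q : ℕ) := Nat.clog_pos one_lt_two h2
      have b1 : 2 ^ (Nat.clog 2 (q : ℕ) - 1) < (q : ℕ) := by
        simpa using Nat.pow_pred_clog_lt_self one_lt_two h2
      have b2 : (q : ℕ) ≤ 2 ^ Nat.clog 2 (q : ℕ) := Nat.le_pow_clog one_lt_two _
      have hlow : 2 ^ (Nat.clog 2 (q : ℕ)) < 2 * (q : ℕ) := by
        have : 2 ^ Nat.clog 2 (q:ℕ) = 2 * 2 ^ (Nat.clog 2 (q:ℕ) - 1) := by
          rw [← pow_succ']; congr 1; omega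
        omega
      have hhigh : 2 * (q : ℕ) ≤ 2 ^ (Nat.clog 2 (q : ℕ) + 1) := by
        rw [pow_succ]; omega
      rw [clog2_eq hlow hhigh]


lemma g0_encode (n : ℕ) : g 0 (encodeNat n) = Nat.clog 2 n := by
  cases h : (n : Num) with
  | zero =>
    have hn : n = 0 := by
      have := Num.to_of_nat n
      rw [h] at this
      simpa using this.symm
    have he : encodeNat n = [] := by
      show encodeNum (n : Num) = _
      rw [h]
      rfl
    rw [he, hn, Nat.clog_zero_right]
    rfl
  | pos p =>
    have hn : (p : ℕ) = n := by
      have := Num.to_of_nat n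
      rw [h] at this
      exact this
    have he : encodeNat n = encodePosNum p := by
      show encodeNum (n : Num) = _
      rw [h]
      rfl
    rw [he, clog_enc, hn]

lemma initList_eq (l : List Bool) : initList tm l = cfg (some 0) initσ l [] [] := by
  unfold initList cfg
  congr 1
  exact funext fun k : Fin 3 => by fin_cases k <;> rfl

lemma haltList_eq (l : List Bool) : haltList tm l = cfg none initσ [] l [] := by
  unfold haltList cfg
  congr 1
  exact funext fun k : Fin 3 => by fin_cases k <;> rfl

noncomputable def machine :
    TM2ComputableInTime encodingNatBool.encode encodingNatBool.encode (Nat.clog 2) where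
  tm := tm
  inputAlphabet := Equiv.refl _
  outputAlphabet := Equiv.refl _
  time := fun x => 9 * x + 1
  outputsFun := fun n => by
    have h0 : encodeNat 0 = [] := by unfold encodeNat; rw [Nat.cast_zero]; rfl
    have H : ∃ k, (flip bind tm.step)^[k]
          (some (cfg (some 0) initσ (encodeNat n) [] [])) =
          some (cfg none initσ [] (encodeNat (Nat.clog 2 n)) [])
        ∧ k ≤ 9 * (encodeNat n).length + 1 := by
      obtain ⟨k, hk, hb⟩ := mainRun (encodeNat n) none 0 0
      rw [h0] at hk hb
      refine ⟨k, ?_, ?_⟩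
      · have hg : 0 + g 0 (encodeNat n) = Nat.clog 2 n := by simpa using g0_encode n
        rw [hg] at hk
        exact hk
      · simpa [phi] using hb
    refine ⟨⟨H.choose, ?_⟩, ?_⟩
    · show (flip bind tm.step)^[H.choose]
          (some (initList tm (List.map (Equiv.refl Bool).invFun (encodeNat n)))) =
          some (haltList tm
            (List.map (Equiv.refl Bool).invFun (encodeNat (Nat.clog 2 n))))
      have e0 : ∀ l : List Bool, List.map (Equiv.refl Bool).invFun l = l := by simp
      erw [e0, e0, initList_eq, haltList_eq]
      exact H.choose_spec.1
    · show H.choose ≤ 9 * (List.length (encodeNat n)) + 1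
      exact H.choose_spec.2

end ClogTM

/-- The ceiling base-2 logarithm `Nat.clog 2` is computable in linear time on a (multitape)
Turing machine, with natural numbers encoded in binary. -/
theorem clog_computableInLinearTime :
    ∃ (C : ℕ) (tm : Turing.TM2ComputableInTime Computability.encodingNatBool.encode
        Computability.encodingNatBool.encode (Nat.clog 2)),
      ∀ x, tm.time x ≤ C * x + C := by
  refine ⟨10, ClogTM.machine, fun x => ?_⟩
  show 9 * x + 1 ≤ 10 * x + 10
  omega
end

section
/- For every k ≥ 3, A k 3 > exp^(4)(k), the fourth iterate of exp applied to k. -/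
/-- The Ackermann function variant: `A 0 n = 2^n`, `A (k+1) 0 = 1`,
`A (k+1) (n+1) = A k (A (k+1) n)`. -/
def A : ℕ → ℕ → ℕ
  | 0, n => 2 ^ n
  | _ + 1, 0 => 1
  | k + 1, n + 1 => A k (A (k + 1) n)

/-- `exp n = 2 ^ n`. -/
def exp (n : ℕ) : ℕ := 2 ^ n

/-! Unfolding twice, `A k 3 = A (k-1) 4 = A (k-2) N` with `N = A (k-1) 3`. Since `A (k-1) 3` grows
strictly in `k`, `N ≥ k + 7`, and since `A` is monotone in its first argument,
`A (k-2) N ≥ A 1 N = exp^[N] 1 = exp^[4] (exp^[N-4] 1)`, where `exp^[N-4] 1 > N - 4 > k`. -/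

lemma exp_strictMono : StrictMono exp := fun _ _ h => Nat.pow_lt_pow_right one_lt_two h

lemma lt_exp_iterate_one (n : ℕ) : n < exp^[n] 1 := by
  induction n with
  | zero => simp
  | succ n ih =>
    rw [Function.iterate_succ_apply']
    exact (Nat.succ_le_of_lt ih).trans_lt Nat.lt_two_pow_self

namespace A

lemma zero_left (n : ℕ) : A 0 n = 2 ^ n := by rw [A]

lemma succ_zero (k : ℕ) : A (k + 1) 0 = 1 := by rw [A]

lemma succ_succ (k n : ℕ) : A (k + 1) (n + 1) = A k (A (k + 1) n) := by rw [A]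

lemma zero_right (k : ℕ) : A k 0 = 1 := by
  cases k with
  | zero => rw [zero_left, pow_zero]
  | succ k => exact succ_zero k

lemma one_right (k : ℕ) : A k 1 = 2 := by
  induction k with
  | zero => rw [zero_left, pow_one]
  | succ k ih => rw [show 1 = 0 + 1 from rfl, succ_succ, zero_right, ih]

lemma two_right (k : ℕ) : A k 2 = 4 := by
  induction k with
  | zero => rw [zero_left]; rfl
  | succ k ih => rw [succ_succ, one_right, ih]

lemma lt_self (k n : ℕ) : n < A k n := by
  induction k generalizing n with
  | zero => rw [zero_left]; exact Nat.lt_two_pow_self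
  | succ k ih =>
    induction n with
    | zero => rw [succ_zero]; exact Nat.zero_lt_one
    | succ n ihn => rw [succ_succ]; exact (Nat.succ_le_of_lt ihn).trans_lt (ih _)

lemma strictMono (k : ℕ) : StrictMono (A k) := by
  refine strictMono_nat_of_lt_succ fun n => ?_
  cases k with
  | zero => rw [zero_left, zero_left]; exact Nat.pow_lt_pow_right one_lt_two n.lt_succ_self
  | succ k => rw [succ_succ]; exact lt_self k _

lemma monotone_left (n : ℕ) : Monotone (A · n) := by
  refine monotone_nat_of_le_succ fun k => ?_
  cases n with
  | zero => rw [zero_right, zero_right]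
  | succ n => rw [succ_succ]; exact (strictMono k).monotone (lt_self (k + 1) n)

lemma one_eq_iterate (n : ℕ) : A 1 n = exp^[n] 1 := by
  induction n with
  | zero => rw [zero_right]; rfl
  | succ n ih => rw [succ_succ, Function.iterate_succ_apply', ← ih, zero_left]; rfl

lemma succ_three (k : ℕ) : A (k + 1) 3 = A k 4 := by
  rw [succ_succ, two_right]

lemma add_eight_le_three (k : ℕ) : k + 8 ≤ A k 3 := by
  induction k with
  | zero => rw [zero_left]; norm_num
  | succ k ih =>
    have := strictMono k (show 3 < 4 by norm_num)
    rw [succ_three]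
    omega

end A

theorem A_k_three_gt (k : ℕ) (hk : 3 ≤ k) : A k 3 > exp^[4] k := by
  obtain ⟨m, rfl⟩ := Nat.exists_eq_add_of_le' hk
  have hN := A.add_eight_le_three (m + 2)
  obtain ⟨j, hj⟩ : ∃ j, A (m + 2) 3 = j + 4 := Nat.exists_eq_add_of_le' (by omega)
  calc exp^[4] (m + 3) < exp^[4] (exp^[j] 1) :=
        exp_strictMono.iterate 4 (by have := lt_exp_iterate_one j; omega)
    _ = A 1 (j + 4) := by rw [A.one_eq_iterate, add_comm j, Function.iterate_add_apply]
    _ ≤ A (m + 1) (j + 4) := A.monotone_left _ (by omega)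
    _ = A (m + 3) 3 := by rw [A.succ_three, A.succ_succ (m + 1) 3, hj]
end

section
/- For every k ∈ ℕ and every n ≥ 1, A^T (k+1) n = A k n, where A^T is Tarjan's version of the Ackermann function. -/
/-- Tarjan's version of the Ackermann function: `AT 0 n = 2n`, `AT (k+1) 0 = 0`,
`AT (k+1) 1 = 2`, `AT (k+1) (n+2) = AT k (AT (k+1) (n+1))`. -/
def AT : ℕ → ℕ → ℕ
  | 0, n => 2 * n
  | _ + 1, 0 => 0
  | _ + 1, 1 => 2
  | k + 1, n + 2 => AT k (AT (k + 1) (n + 1))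

lemma A_one (k : ℕ) : A k 1 = 2 := by
  induction k with
  | zero => simp [A]
  | succ k ih => simp [A, ih]

lemma A_pos (k n : ℕ) : 1 ≤ A k n := by
  induction k generalizing n with
  | zero => simpa [A] using Nat.one_le_two_pow
  | succ k ih =>
    cases n with
    | zero => simp [A]
    | succ n => exact (by simpa [A] using ih (A (k+1) n))

theorem AT_succ_eq_A (k n : ℕ) (hn : 1 ≤ n) : AT (k + 1) n = A k n := by
  induction k generalizing n with
  | zero =>
    induction n with
    | zero => omega
    | succ n ih =>
      cases n with
      | zero => simp [AT, A]
      | succ n =>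
        rw [show n + 1 + 1 = n + 2 from rfl]
        rw [AT, ih (by omega), AT, A, A, pow_succ]
        ring
  | succ k ihk =>
    induction n with
    | zero => omega
    | succ n ihn =>
      cases n with
      | zero => simp [AT, A, A_one]
      | succ n =>
        rw [show n + 1 + 1 = n + 2 from rfl]
        rw [AT, ihn (by omega), ihk _ (A_pos _ _)]; conv_rhs => rw [show n + 2 = (n+1)+1 from rfl, A]
end

section
/- For all k ∈ ℕ and all m ≥ 4, Inv_{A_{k+1}}(m) ≤ 2·log(log(m)), where log is the ceiling base-2 logarithm. -/
/-- The inverse of a function `f : ℕ → ℕ` (intended for unbounded nondecreasing `f`):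
`invf f n` is the least `k` such that `f k ≥ n`. -/
noncomputable def invf (f : ℕ → ℕ) (n : ℕ) : ℕ := sInf {k | n ≤ f k}

lemma A_succ_succ (k n : ℕ) : A (k + 1) (n + 1) = A k (A (k + 1) n) := by
  simp [A]

lemma A_gt (k n : ℕ) : n + 1 ≤ A k n := by
  induction k generalizing n with
  | zero => simpa [A] using Nat.lt_two_pow_self (n := n)
  | succ k ih =>
    induction n with
    | zero => simp [A]
    | succ n ihn =>
      rw [A_succ_succ]
      calc n + 2 ≤ A (k+1) n + 1 := by omega
        _ ≤ A k (A (k+1) n) := ih _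

lemma A_mono (k : ℕ) : StrictMono (A k) := by
  apply strictMono_nat_of_lt_succ
  intro n
  cases k with
  | zero => simpa [A] using Nat.pow_lt_pow_right one_lt_two (Nat.lt_succ_self n)
  | succ k =>
    rw [A_succ_succ]
    have := A_gt k (A (k+1) n)
    omega

lemma A_le_succ (k n : ℕ) : A k n ≤ A (k + 1) n := by
  induction n with
  | zero => cases k <;> simp [A]
  | succ n ih =>
    rw [A_succ_succ]
    calc A k (n+1) ≤ A k (A (k+1) n) := (A_mono k).monotone (A_gt _ _)

lemma A_one_le (k n : ℕ) : A 1 n ≤ A (k + 1) n := by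
  induction k with
  | zero => exact le_refl _
  | succ k ih => exact ih.trans (A_le_succ _ _)

lemma A_one_ge (L : ℕ) : 2 ^ L ≤ A 1 (L + 1) := by
  induction L with
  | zero => simp [A]
  | succ L ih =>
    rw [show L + 1 + 1 = L + 1 + 1 from rfl, A_succ_succ]
    simp only [show A 0 (A 1 (L+1)) = 2 ^ A 1 (L+1) from by simp [A]]
    have h2 : L + 1 ≤ 2 ^ L := Nat.lt_two_pow_self (n := L)
    exact Nat.pow_le_pow_right (by norm_num) (le_trans h2 ih)

theorem invf_A_succ_le (k m : ℕ) (hm : 4 ≤ m) :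
    invf (A (k + 1)) m ≤ 2 * Nat.clog 2 (Nat.clog 2 m) := by
  have hc2 : 2 ≤ Nat.clog 2 m := by
    have : 2 ^ 1 < m := by omega
    have := (Nat.lt_clog_iff_pow_lt one_lt_two).mpr this
    omega
  have hm1 : m ≤ 2 ^ Nat.clog 2 m := Nat.le_pow_clog one_lt_two m
  have hc1 : Nat.clog 2 m ≤ 2 ^ Nat.clog 2 (Nat.clog 2 m) := Nat.le_pow_clog one_lt_two _
  generalize hL : Nat.clog 2 (Nat.clog 2 m) = L at *
  have hL1 : 1 ≤ L := by
    rcases Nat.eq_zero_or_pos L with h | h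
    · rw [h] at hc1; omega
    · exact h
  have hm2 : m ≤ 2 ^ 2 ^ L :=
    hm1.trans (Nat.pow_le_pow_right (by norm_num) hc1)
  have h1 : m ≤ A 1 (2 * L) := by
    rcases Nat.lt_or_ge L 2 with h | h
    · have hL' : L = 1 := by omega
      subst hL'
      have hA : A 1 2 = 4 := by simp [A_succ_succ, A]
      have : Nat.clog 2 m ≤ 2 := by simpa using hc1
      have : m ≤ 4 := by
        have := hm1.trans (Nat.pow_le_pow_right (by norm_num) this)
        simpa using this
      simpa [hA] using this.trans (le_of_eq rfl)
    · have h2 : 2 ^ 2 ^ L ≤ A 1 (L + 2) := by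
        rw [show L + 2 = (L + 1) + 1 from rfl, A_succ_succ]
        simp only [show ∀ x, A 0 x = 2 ^ x from fun x => by simp [A]]
        exact Nat.pow_le_pow_right (by norm_num) (A_one_ge L)
      have h3 : A 1 (L + 2) ≤ A 1 (2 * L) := (A_mono 1).monotone (by omega)
      omega
  have key : m ≤ A (k + 1) (2 * L) := h1.trans (A_one_le k _)
  exact Nat.sInf_le key
end

section
/- (Soundness of witness lists) Let m ∈ ℕ and let L be a witness list below m. Then for every entry (u,v,w) of L: if w > 0 then A u v = w, and if w = 0 then A u v < m. In particular, if the last entry of L is (k,n,0), then A k n < m. -/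
/-- `L` is a witness list below `m`: every entry is either of a "leaf" form
`(0, v, 2^v)`, `(v, 0, 1)`, or `(3, v, 0)` with `A 3 v < m`, or is of the form `(u, v, w)`
with `u, v ≥ 1` and is justified by two earlier entries `(u, v-1, w')` and `(u-1, w', w)`
with `w' > 0`. -/
def IsWitnessList (m : ℕ) (L : List (ℕ × ℕ × ℕ)) : Prop :=
  ∀ i < L.length,
    (∃ v, L.getD i (0, 0, 0) = (0, v, 2 ^ v)) ∨
    (∃ v, L.getD i (0, 0, 0) = (v, 0, 1)) ∨
    (∃ v, L.getD i (0, 0, 0) = (3, v, 0) ∧ A 3 v < m) ∨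
    (∃ u v w, 1 ≤ u ∧ 1 ≤ v ∧ L.getD i (0, 0, 0) = (u, v, w) ∧
      ∃ j < i, ∃ j' < i, ∃ w' > 0,
        L.getD j (0, 0, 0) = (u, v - 1, w') ∧ L.getD j' (0, 0, 0) = (u - 1, w', w))

theorem witnessList_sound (m : ℕ) (L : List (ℕ × ℕ × ℕ)) (hL : IsWitnessList m L) :
    (∀ i < L.length, ∀ u v w, L.getD i (0, 0, 0) = (u, v, w) →
      (0 < w → A u v = w) ∧ (w = 0 → A u v < m)) ∧
    (∀ k n, L.getLast? = some (k, n, 0) → A k n < m) := by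
  have hpos : ∀ u v, 0 < A u v := by
    intro u
    induction u with
    | zero => intro v; simp [A]
    | succ k ih =>
      intro v
      induction v with
      | zero => simp [A]
      | succ n ihn => rw [show A (k+1) (n+1) = A k (A (k+1) n) by rw [A]]; exact ih _
  have main : ∀ i, i < L.length → ∀ u v w, L.getD i (0, 0, 0) = (u, v, w) →
      (0 < w → A u v = w) ∧ (w = 0 → A u v < m) := by
    intro i
    induction i using Nat.strong_induction_on with
    | _ i IH =>
      intro hi u v w h
      rcases hL i hi with ⟨v', hv⟩ | ⟨v', hv⟩ | ⟨v', hv, hm⟩ |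
        ⟨u', v', w', hu', hv', heq, j, hj, j', hj', w'', hw'', hj1, hj2⟩
      · rw [h] at hv
        obtain ⟨h1, h2, h3⟩ : u = 0 ∧ v = v' ∧ w = 2 ^ v' := by
          simpa [Prod.ext_iff] using hv
        subst h1 h2 h3
        constructor
        · intro _; simp [A]
        · intro hw; exact absurd hw (by positivity)
      · rw [h] at hv
        obtain ⟨h1, h2, h3⟩ : u = v' ∧ v = 0 ∧ w = 1 := by
          simpa [Prod.ext_iff] using hv
        subst h1 h2 h3
        constructor
        · intro _; cases u <;> simp [A]
        · intro hw; exact absurd hw one_ne_zero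
      · rw [h] at hv
        obtain ⟨h1, h2, h3⟩ : u = 3 ∧ v = v' ∧ w = 0 := by
          simpa [Prod.ext_iff] using hv
        subst h1 h2 h3
        exact ⟨fun hw => absurd rfl hw.ne, fun _ => hm⟩
      · rw [h] at heq
        obtain ⟨h1, h2, h3⟩ : u = u' ∧ v = v' ∧ w = w' := by
          simpa [Prod.ext_iff] using heq
        subst h1 h2 h3
        have hjlen : j < L.length := hj.trans hi
        have hj'len : j' < L.length := hj'.trans hi
        have H1 := (IH j hj hjlen _ _ _ hj1).1 hw''
        have H2 := IH j' hj' hj'len _ _ _ hj2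
        obtain ⟨u₀, rfl⟩ := Nat.exists_eq_add_of_le hu'
        obtain ⟨v₀, rfl⟩ := Nat.exists_eq_add_of_le hv'
        have key : A (1 + u₀) (1 + v₀) = A u₀ w'' := by
          rw [show (1 + u₀) = u₀ + 1 by omega, show (1 + v₀) = v₀ + 1 by omega]
          rw [show A (u₀+1) (v₀+1) = A u₀ (A (u₀+1) v₀) by rw [A]]
          congr 1
          rw [show (1 + v₀ - 1) = v₀ by omega, show (1 + u₀) = u₀ + 1 by omega] at H1
          exact H1
        simp only [show (1 + u₀ - 1) = u₀ by omega] at H2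
        rw [key]
        exact H2
  refine ⟨main, ?_⟩
  intro k n hlast
  have hne : L ≠ [] := by intro h; rw [h] at hlast; simp at hlast
  have hlt : L.length - 1 < L.length := by
    have := List.length_pos_iff.mpr hne; omega
  have : L.getD (L.length - 1) (0, 0, 0) = (k, n, 0) := by
    rw [List.getD_eq_getElem?_getD, ← List.getLast?_eq_getElem?, hlast]
    rfl
  exact (main _ hlt _ _ _ this).2 rfl
end
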